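/- arXiv:2404.07140 — 5 statements merged into one kernel-verified Lean document; each statement's English description precedes it below -/
import Mathlib

section
/- For finitely-supported discrete random variables X_1,...,X_n with n ≥ 2, the dual total correlation satisfies DTC(X) = I(X^{n-1}; X_n) + Σ_{j=2}^{n-1} I(X^{j-1}; X_j | X_{j+1}^n), where X^{j-1} = (X_1,...,X_{j-1}) and X_{j+1}^n = (X_{j+1},...,X_n). -/
open Classical Finset Real

namespace HOI

/-- Distribution (pmf) of a random variable `X` on a finite sample space with mass `p`. -/
noncomputable def pdist {Ω α : Type} [Fintype Ω] (p : Ω → ℝ) (X : Ω → α) (a : α) : ℝ :=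
  ∑ ω, if X ω = a then p ω else 0

/-- Shannon entropy of a finitely-supported discrete random variable. -/
noncomputable def ent {Ω α : Type} [Fintype Ω] [Fintype α] (p : Ω → ℝ) (X : Ω → α) : ℝ :=
  ∑ a, Real.negMulLog (pdist p X a)

/-- Conditional entropy H(X|Y) = H(X,Y) - H(Y). -/
noncomputable def cent {Ω α β : Type} [Fintype Ω] [Fintype α] [Fintype β]
    (p : Ω → ℝ) (X : Ω → α) (Y : Ω → β) : ℝ :=
  ent p (fun ω => (X ω, Y ω)) - ent p Y

/-- Mutual information I(X;Y). -/
noncomputable def mi {Ω α β : Type} [Fintype Ω] [Fintype α] [Fintype β]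
    (p : Ω → ℝ) (X : Ω → α) (Y : Ω → β) : ℝ :=
  ent p X + ent p Y - ent p (fun ω => (X ω, Y ω))

/-- Conditional mutual information I(X;Y|Z). -/
noncomputable def cmi {Ω α β γ : Type} [Fintype Ω] [Fintype α] [Fintype β] [Fintype γ]
    (p : Ω → ℝ) (X : Ω → α) (Y : Ω → β) (Z : Ω → γ) : ℝ :=
  cent p X Z + cent p Y Z - cent p (fun ω => (X ω, Y ω)) Z

/-- Interaction information II(X;Y;Z) = I(X;Y) - I(X;Y|Z). -/
noncomputable def ii {Ω α β γ : Type} [Fintype Ω] [Fintype α] [Fintype β] [Fintype γ]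
    (p : Ω → ℝ) (X : Ω → α) (Y : Ω → β) (Z : Ω → γ) : ℝ :=
  mi p X Y - cmi p X Y Z

/-- Sub-vector of components of `X` with indices in `s`. -/
def subvec {Ω : Type} {n : ℕ} {α : Fin n → Type} (X : ∀ i, Ω → α i) (s : Finset (Fin n)) :
    Ω → ((i : {j // j ∈ s}) → α i.1) :=
  fun ω i => X i.1 ω

/-- The full random vector. -/
def fullvec {Ω : Type} {n : ℕ} {α : Fin n → Type} (X : ∀ i, Ω → α i) : Ω → (∀ i, α i) :=
  fun ω i => X i ω

/-- Joint entropy of the components of `X` with indices in `s`. -/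
noncomputable def vecH {Ω : Type} [Fintype Ω] {n : ℕ} {α : Fin n → Type} [∀ i, Fintype (α i)]
    (p : Ω → ℝ) (X : ∀ i, Ω → α i) (s : Finset (Fin n)) : ℝ :=
  ent p (subvec X s)

/-- Total correlation. -/
noncomputable def TC {Ω : Type} [Fintype Ω] {n : ℕ} {α : Fin n → Type} [∀ i, Fintype (α i)]
    (p : Ω → ℝ) (X : ∀ i, Ω → α i) : ℝ :=
  (∑ j, ent p (X j)) - ent p (fullvec X)

/-- Dual total correlation. -/
noncomputable def DTC {Ω : Type} [Fintype Ω] {n : ℕ} {α : Fin n → Type} [∀ i, Fintype (α i)]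
    (p : Ω → ℝ) (X : ∀ i, Ω → α i) : ℝ :=
  ent p (fullvec X) - ∑ j, (ent p (fullvec X) - vecH p X (Finset.univ \ {j}))

/-- O-information. -/
noncomputable def Oinfo {Ω : Type} [Fintype Ω] {n : ℕ} {α : Fin n → Type} [∀ i, Fintype (α i)]
    (p : Ω → ℝ) (X : ∀ i, Ω → α i) : ℝ :=
  ((n : ℝ) - 2) * ent p (fullvec X) + ∑ j, (ent p (X j) - vecH p X (Finset.univ \ {j}))

/-- Redundancy-synergy index. -/
noncomputable def RSI {Ω β : Type} [Fintype Ω] [Fintype β] {n : ℕ} {α : Fin n → Type}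
    [∀ i, Fintype (α i)] (p : Ω → ℝ) (X : ∀ i, Ω → α i) (Y : Ω → β) : ℝ :=
  (∑ j, mi p (X j) Y) - mi p (fullvec X) Y

end HOI

open HOI

section Aux
variable {Ω : Type} [Fintype Ω]

lemma ent_congr' {α β : Type} [Fintype α] [Fintype β] (p : Ω → ℝ)
    (Y : Ω → α) (Z : Ω → β) (f : α → β) (g : β → α)
    (hf : ∀ ω, Z ω = f (Y ω)) (hg : ∀ ω, Y ω = g (Z ω)) :
    ent p Z = ent p Y := by
  classical
  have hzero : ∀ {γ : Type} [Fintype γ] (W : Ω → γ) (c : γ),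
      c ∉ Finset.image W Finset.univ → pdist p W c = 0 := by
    intro γ _ W c hc
    refine Finset.sum_eq_zero fun ω _ => ?_
    rw [if_neg]
    intro h
    exact hc (Finset.mem_image.mpr ⟨ω, Finset.mem_univ ω, h⟩)
  have h1 : ent p Z = ∑ b ∈ Finset.image Z Finset.univ, Real.negMulLog (pdist p Z b) :=
    (Finset.sum_subset (Finset.subset_univ _) (fun b _ hb => by
      rw [hzero Z b hb, Real.negMulLog_zero])).symm
  have h2 : ent p Y = ∑ a ∈ Finset.image Y Finset.univ, Real.negMulLog (pdist p Y a) :=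
    (Finset.sum_subset (Finset.subset_univ _) (fun a _ ha => by
      rw [hzero Y a ha, Real.negMulLog_zero])).symm
  have himg : Finset.image Z Finset.univ = Finset.image f (Finset.image Y Finset.univ) := by
    rw [Finset.image_image]
    congr 1
    funext ω
    exact hf ω
  have hinj : ∀ a ∈ Finset.image Y Finset.univ, ∀ b ∈ Finset.image Y Finset.univ,
      f a = f b → a = b := by
    rintro a ha b hb hab
    obtain ⟨ω₁, -, rfl⟩ := Finset.mem_image.mp ha
    obtain ⟨ω₂, -, rfl⟩ := Finset.mem_image.mp hb
    calc Y ω₁ = g (Z ω₁) := hg ω₁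
    _ = g (f (Y ω₁)) := by rw [hf ω₁]
    _ = g (f (Y ω₂)) := by rw [hab]
    _ = g (Z ω₂) := by rw [hf ω₂]
    _ = Y ω₂ := (hg ω₂).symm
  rw [h1, h2, himg, Finset.sum_image hinj]
  refine Finset.sum_congr rfl fun a ha => ?_
  obtain ⟨ω₀, -, rfl⟩ := Finset.mem_image.mp ha
  congr 1
  refine Finset.sum_congr rfl fun ω _ => if_congr ?_ rfl rfl
  constructor
  · intro h
    rw [hg ω, h, ← hf ω₀, ← hg ω₀]
  · intro h
    rw [hf ω, h]

@[reducible] def Det {α β : Type} (Y : Ω → α) (Z : Ω → β) : Prop :=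
  ∃ (f : α → β) (g : β → α), (∀ ω, Z ω = f (Y ω)) ∧ (∀ ω, Y ω = g (Z ω))

lemma Det.ent_eq {α β : Type} [Fintype α] [Fintype β] (p : Ω → ℝ) {Y : Ω → α} {Z : Ω → β}
    (h : Det Y Z) : ent p Z = ent p Y := by
  obtain ⟨f, g, hf, hg⟩ := h
  exact ent_congr' p Y Z f g hf hg

lemma Det.rfl {α : Type} (Y : Ω → α) : Det Y Y :=
  ⟨id, id, fun _ => Eq.refl _, fun _ => Eq.refl _⟩

lemma Det.trans {α β γ : Type} {Y : Ω → α} {Z : Ω → β} {W : Ω → γ}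
    (h1 : Det Y Z) (h2 : Det Z W) : Det Y W := by
  obtain ⟨f, g, hf, hg⟩ := h1
  obtain ⟨f', g', hf', hg'⟩ := h2
  exact ⟨f' ∘ f, g ∘ g', fun ω => by simp [← hf ω, ← hf' ω],
    fun ω => by simp [← hg' ω, ← hg ω]⟩

lemma Det.pair {α α' β β' : Type} {A : Ω → α} {A' : Ω → α'} {B : Ω → β} {B' : Ω → β'}
    (h1 : Det A A') (h2 : Det B B') :
    Det (fun ω => (A ω, B ω)) (fun ω => (A' ω, B' ω)) := by
  obtain ⟨f, g, hf, hg⟩ := h1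
  obtain ⟨f', g', hf', hg'⟩ := h2
  exact ⟨Prod.map f f', Prod.map g g', fun ω => by simp [← hf ω, ← hf' ω],
    fun ω => by simp [← hg ω, ← hg' ω]⟩

variable {n : ℕ} {α : Fin n → Type} (X : ∀ i, Ω → α i)

lemma det_full : Det (subvec X Finset.univ) (fullvec X) :=
  ⟨fun w i => w ⟨i, Finset.mem_univ i⟩, fun v i => v i.1,
    fun ω => Eq.refl _, fun ω => Eq.refl _⟩

lemma det_single (j : Fin n) : Det (subvec X {j}) (X j) := by
  refine ⟨fun w => w ⟨j, Finset.mem_singleton_self j⟩,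
          fun a i => cast (congrArg α (Finset.mem_singleton.mp i.2)).symm a,
          fun ω => Eq.refl _, fun ω => ?_⟩
  funext i
  obtain ⟨i, hi⟩ := i
  have h : i = j := Finset.mem_singleton.mp hi
  subst h
  rfl

lemma det_union (s t : Finset (Fin n)) :
    Det (subvec X (s ∪ t)) (fun ω => (subvec X s ω, subvec X t ω)) := by
  classical
  refine ⟨fun w => (fun i => w ⟨i.1, Finset.mem_union_left t i.2⟩,
                    fun i => w ⟨i.1, Finset.mem_union_right s i.2⟩),
          fun uv i => if h : i.1 ∈ s then uv.1 ⟨i.1, h⟩ else uv.2 ⟨i.1, by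
            rcases Finset.mem_union.mp i.2 with h' | h'
            · exact absurd h' h
            · exact h'⟩,
          fun ω => Eq.refl _, fun ω => ?_⟩
  funext i
  by_cases h : i.1 ∈ s <;> simp [subvec, h]

variable [∀ i, Fintype (α i)] (p : Ω → ℝ)

lemma entH_subvec (s : Finset (Fin n)) : ent p (subvec X s) = vecH p X s := Eq.refl _

lemma entH_full : ent p (fullvec X) = vecH p X Finset.univ := (det_full X).ent_eq p

lemma entH_single (j : Fin n) : ent p (X j) = vecH p X {j} := (det_single X j).ent_eq p

lemma entH_pair_uu (s t : Finset (Fin n)) :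
    ent p (fun ω => (subvec X s ω, subvec X t ω)) = vecH p X (s ∪ t) :=
  (det_union X s t).ent_eq p

lemma entH_pair_uj (s : Finset (Fin n)) (j : Fin n) :
    ent p (fun ω => (subvec X s ω, X j ω)) = vecH p X (s ∪ {j}) :=
  (((det_union X s {j}).trans ((Det.rfl _).pair (det_single X j)))).ent_eq p

lemma entH_pair_ju (j : Fin n) (t : Finset (Fin n)) :
    ent p (fun ω => (X j ω, subvec X t ω)) = vecH p X ({j} ∪ t) :=
  (((det_union X {j} t).trans ((det_single X j).pair (Det.rfl _)))).ent_eq p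

lemma entH_triple (s : Finset (Fin n)) (j : Fin n) (t : Finset (Fin n)) :
    ent p (fun ω => ((subvec X s ω, X j ω), subvec X t ω)) = vecH p X ((s ∪ {j}) ∪ t) :=
  (((det_union X (s ∪ {j}) t).trans
    (((det_union X s {j}).trans ((Det.rfl _).pair (det_single X j))).pair (Det.rfl _)))).ent_eq p

end Aux


lemma key_tele {n : ℕ} (hn : 2 ≤ n) (h : Finset (Fin n) → ℝ) (m : Fin n) (hm : m.val = n - 1) :
    h Finset.univ - ∑ j, (h Finset.univ - h (Finset.univ \ {j})) =
      (h (Finset.Iio m) + h {m} - h (Finset.Iio m ∪ {m}))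
      + ∑ j ∈ Finset.univ.filter (fun j : Fin n => j.val ≠ 0 ∧ j.val ≠ n - 1),
          ((h (Finset.Iio j ∪ Finset.Ioi j) - h (Finset.Ioi j))
            + (h ({j} ∪ Finset.Ioi j) - h (Finset.Ioi j))
            - (h ((Finset.Iio j ∪ {j}) ∪ Finset.Ioi j) - h (Finset.Ioi j))) := by
  classical
  set F := Finset.univ.filter (fun j : Fin n => j.val ≠ 0 ∧ j.val ≠ n - 1) with hF
  set z : Fin n := ⟨0, by omega⟩ with hz
  set f : ℕ → ℝ := fun k => h (Finset.univ.filter (fun i : Fin n => k ≤ i.val)) with hf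
  have hzv : z.val = 0 := rfl
  -- set identities
  have hIm : Finset.Iio m = Finset.univ \ {m} := by
    ext i
    have hi := i.isLt
    simp only [Finset.mem_Iio, Finset.mem_sdiff, Finset.mem_univ, Finset.mem_singleton,
      Fin.lt_def, Fin.ext_iff, hm, true_and]
    omega
  have hImm : Finset.Iio m ∪ {m} = Finset.univ := by
    ext i
    have hi := i.isLt
    simp only [Finset.mem_union, Finset.mem_Iio, Finset.mem_singleton, Finset.mem_univ,
      Fin.lt_def, Fin.ext_iff, hm, iff_true]
    omega
  have hsm : ({m} : Finset (Fin n)) = Finset.univ.filter (fun i : Fin n => n - 1 ≤ i.val) := by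
    ext i
    have hi := i.isLt
    simp only [Finset.mem_singleton, Finset.mem_filter, Finset.mem_univ, Fin.ext_iff, hm,
      true_and]
    omega
  have hIoi : ∀ j : Fin n, Finset.Ioi j = Finset.univ.filter (fun i : Fin n => j.val + 1 ≤ i.val) := by
    intro j
    ext i
    simp only [Finset.mem_Ioi, Finset.mem_filter, Finset.mem_univ, Fin.lt_def, true_and]
    omega
  have hIU : ∀ j : Fin n, Finset.Iio j ∪ Finset.Ioi j = Finset.univ \ {j} := by
    intro j
    ext i
    simp only [Finset.mem_union, Finset.mem_Iio, Finset.mem_Ioi, Finset.mem_sdiff,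
      Finset.mem_univ, Finset.mem_singleton, Fin.lt_def, Fin.ext_iff, true_and]
    omega
  have hIci : ∀ j : Fin n, ({j} : Finset (Fin n)) ∪ Finset.Ioi j
      = Finset.univ.filter (fun i : Fin n => j.val ≤ i.val) := by
    intro j
    ext i
    simp only [Finset.mem_union, Finset.mem_singleton, Finset.mem_Ioi, Finset.mem_filter,
      Finset.mem_univ, Fin.lt_def, Fin.ext_iff, true_and]
    omega
  have hAll : ∀ j : Fin n, (Finset.Iio j ∪ {j}) ∪ Finset.Ioi j = Finset.univ := by
    intro j
    ext i
    simp only [Finset.mem_union, Finset.mem_Iio, Finset.mem_singleton, Finset.mem_Ioi,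
      Finset.mem_univ, Fin.lt_def, Fin.ext_iff, iff_true]
    omega
  have hg1 : Finset.univ.filter (fun i : Fin n => 1 ≤ i.val) = Finset.univ \ {z} := by
    ext i
    simp only [Finset.mem_filter, Finset.mem_univ, Finset.mem_sdiff, Finset.mem_singleton,
      Fin.ext_iff, hzv, true_and]
    omega
  -- rewrite the summand over F
  have hsummand : ∀ j ∈ F,
      ((h (Finset.Iio j ∪ Finset.Ioi j) - h (Finset.Ioi j))
        + (h ({j} ∪ Finset.Ioi j) - h (Finset.Ioi j))
        - (h ((Finset.Iio j ∪ {j}) ∪ Finset.Ioi j) - h (Finset.Ioi j)))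
      = (h (Finset.univ \ {j}) - h Finset.univ) + (f j.val - f (j.val + 1)) := by
    intro j _
    rw [hIU j, hIci j, hAll j, hIoi j]
    show _ = _ + (h _ - h _)
    ring
  rw [Finset.sum_congr rfl hsummand]
  rw [Finset.sum_add_distrib]
  -- image of F under val
  have hinjval : ∀ a ∈ F, ∀ b ∈ F, a.val = b.val → a = b := fun a _ b _ hab => Fin.ext hab
  have himg : F.image Fin.val = Finset.Ico 1 (n - 1) := by
    ext k
    simp only [Finset.mem_image, hF, Finset.mem_filter, Finset.mem_univ, true_and,
      Finset.mem_Ico]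
    constructor
    · rintro ⟨j, ⟨h1, h2⟩, rfl⟩
      have := j.isLt
      omega
    · rintro ⟨h1, h2⟩
      exact ⟨⟨k, by omega⟩, ⟨by simpa using by omega, by simpa using by omega⟩, rfl⟩
  -- telescoping
  have htel : ∑ j ∈ F, (f j.val - f (j.val + 1)) = f 1 - f (n - 1) := by
    have := Finset.sum_image (s := F) (g := Fin.val) (f := fun k => f k - f (k + 1)) hinjval
    rw [← this, himg, Finset.sum_Ico_eq_sum_range]
    have : ∀ i ∈ Finset.range (n - 1 - 1), f (1 + i) - f (1 + i + 1)
        = (fun k => f (1 + k)) i - (fun k => f (1 + k)) (i + 1) := by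
      intro i _
      simp [add_assoc]
    rw [Finset.sum_congr rfl this, Finset.sum_range_sub' (fun k => f (1 + k))]
    congr 2
    omega
  rw [htel]
  -- split the universal sums
  have hzm : z ≠ m := by
    intro hzm
    have : z.val = m.val := by rw [hzm]
    rw [hzv, hm] at this
    omega
  have hnotF : Finset.univ.filter (fun j : Fin n => ¬(j.val ≠ 0 ∧ j.val ≠ n - 1))
      = ({z, m} : Finset (Fin n)) := by
    ext j
    have := j.isLt
    simp only [Finset.mem_filter, Finset.mem_univ, true_and, Finset.mem_insert,
      Finset.mem_singleton, Fin.ext_iff, hzv, hm, not_and_or, not_not]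
    try omega
  have hsplit : ∀ q : Fin n → ℝ, ∑ j, q j = ∑ j ∈ F, q j + (q z + q m) := by
    intro q
    rw [← Finset.sum_filter_add_sum_filter_not Finset.univ
      (fun j : Fin n => j.val ≠ 0 ∧ j.val ≠ n - 1) q, hnotF, Finset.sum_pair hzm, hF]
  have hcard : (F.card : ℝ) = (n : ℝ) - 2 := by
    have h1 : F.card = (F.image Fin.val).card := (Finset.card_image_of_injOn
      (fun a ha b hb hab => hinjval a ha b hb hab)).symm
    rw [h1, himg, Nat.card_Ico]
    have : n - 1 - 1 = n - 2 := by omega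
    rw [this]
    rw [Nat.cast_sub (by omega)]
    norm_num
  have hf1 : f 1 = h (Finset.univ \ {z}) := by rw [hf]; simp only; rw [hg1]
  have hfm : f (n - 1) = h {m} := by rw [hf]; simp only; rw [hsm]
  have hIm' : h (Finset.Iio m) = h (Finset.univ \ {m}) := by rw [hIm]
  rw [hImm, hIm', hf1, hfm]
  rw [hsplit (fun j => h Finset.univ - h (Finset.univ \ {j}))]
  simp only [Finset.sum_sub_distrib, Finset.sum_const, nsmul_eq_mul, hcard]
  ring


/-- telescoping identity for the dual total correlation. -/
theorem dtc_telescope {Ω : Type} [Fintype Ω] {n : ℕ} {α : Fin n → Type}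
    [∀ i, Fintype (α i)] (hn : 2 ≤ n)
    (p : Ω → ℝ) (hp : ∀ ω, 0 ≤ p ω) (hp1 : ∑ ω, p ω = 1)
    (X : ∀ i, Ω → α i) :
    DTC p X =
      mi p (subvec X (Finset.Iio (⟨n - 1, by omega⟩ : Fin n))) (X ⟨n - 1, by omega⟩)
      + ∑ j ∈ Finset.univ.filter (fun j : Fin n => j.val ≠ 0 ∧ j.val ≠ n - 1),
          cmi p (subvec X (Finset.Iio j)) (X j) (subvec X (Finset.Ioi j)) := by
  simp only [DTC, mi, cmi, cent, entH_full X p, entH_single X p, entH_pair_uu X p,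
    entH_pair_uj X p, entH_pair_ju X p, entH_triple X p, entH_subvec X p]
  exact key_tele hn (vecH p X) _ rfl
end

section
/- For finitely-supported discrete random variables X_1,...,X_n with n ≥ 3, the O-information satisfies Ω(X) = Σ_{j=2}^{n-1} II(X^{j-1}; X_j; X_{j+1}^n), where II(A;B;C) := I(A;B) - I(A;B|C) is the interaction information. -/
open Classical Finset Real

namespace HOI

section Aux

variable {Ω : Type} [Fintype Ω]

lemma ent_comp {α β : Type} [Fintype α] [Fintype β] (p : Ω → ℝ) (Y : Ω → α)
    (e : α → β) (he : Function.Injective e) :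
    ent p (fun ω => e (Y ω)) = ent p Y := by
  have h1 : ∀ a, pdist p (fun ω => e (Y ω)) (e a) = pdist p Y a := by
    intro a
    unfold pdist
    refine Finset.sum_congr rfl fun ω _ => ?_
    simp [he.eq_iff]
  have h2 : ∀ b, b ∉ Finset.image e Finset.univ → pdist p (fun ω => e (Y ω)) b = 0 := by
    intro b hb
    unfold pdist
    refine Finset.sum_eq_zero fun ω _ => ?_
    rw [if_neg]
    intro h
    exact hb (by simp [← h])
  calc ent p (fun ω => e (Y ω))
      = ∑ b ∈ Finset.image e Finset.univ, Real.negMulLog (pdist p (fun ω => e (Y ω)) b) := by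
        rw [eq_comm, ent]
        refine Finset.sum_subset (Finset.subset_univ _) fun b _ hb => ?_
        rw [h2 b hb, Real.negMulLog_zero]
    _ = ∑ a, Real.negMulLog (pdist p (fun ω => e (Y ω)) (e a)) :=
        Finset.sum_image (fun a _ b _ h => he h)
    _ = ent p Y := by simp only [h1, ent]

variable {n : ℕ} {α : Fin n → Type} [∀ i, Fintype (α i)] (p : Ω → ℝ) (X : ∀ i, Ω → α i)

lemma ent_fullvec : ent p (fullvec X) = vecH p X Finset.univ := by
  have hinj : Function.Injective
      (fun (v : ∀ i, α i) (i : {j // j ∈ (Finset.univ : Finset (Fin n))}) => v i.1) := by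
    intro v w h
    funext i
    exact congrFun h ⟨i, Finset.mem_univ i⟩
  exact (ent_comp p (fullvec X) _ hinj).symm

lemma ent_single (j : Fin n) : ent p (X j) = vecH p X {j} := by
  have hinj : Function.Injective
      (fun (v : (i : {k // k ∈ ({j} : Finset (Fin n))}) → α i.1) => v ⟨j, Finset.mem_singleton_self j⟩) := by
    intro v w h
    funext i
    have hi : i = ⟨j, Finset.mem_singleton_self j⟩ := Subtype.ext (Finset.mem_singleton.mp i.2)
    rw [hi]
    exact h
  exact ent_comp p (subvec X {j}) _ hinj

lemma ent_pair_vv (s t : Finset (Fin n)) :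
    ent p (fun ω => (subvec X s ω, subvec X t ω)) = vecH p X (s ∪ t) := by
  have hinj : Function.Injective
      (fun (v : (i : {k // k ∈ s ∪ t}) → α i.1) =>
        ((fun i => v ⟨i.1, Finset.mem_union_left t i.2⟩ : (i : {j // j ∈ s}) → α i.1),
         (fun i => v ⟨i.1, Finset.mem_union_right s i.2⟩ : (i : {j // j ∈ t}) → α i.1))) := by
    intro v w h
    funext i
    rcases Finset.mem_union.mp i.2 with hi | hi
    · exact congrFun (congrArg Prod.fst h) ⟨i.1, hi⟩
    · exact congrFun (congrArg Prod.snd h) ⟨i.1, hi⟩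
  exact ent_comp p (subvec X (s ∪ t)) _ hinj

lemma ent_pair_vx (s : Finset (Fin n)) (j : Fin n) :
    ent p (fun ω => (subvec X s ω, X j ω)) = vecH p X (insert j s) := by
  have hinj : Function.Injective
      (fun (v : (i : {k // k ∈ insert j s}) → α i.1) =>
        ((fun i => v ⟨i.1, Finset.mem_insert_of_mem i.2⟩ : (i : {k // k ∈ s}) → α i.1),
         v ⟨j, Finset.mem_insert_self j s⟩)) := by
    intro v w h
    funext i
    rcases Finset.mem_insert.mp i.2 with hi | hi
    · have hij : i = ⟨j, Finset.mem_insert_self j s⟩ := Subtype.ext hi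
      rw [hij]
      exact congrArg Prod.snd h
    · exact congrFun (congrArg Prod.fst h) ⟨i.1, hi⟩
  exact ent_comp p (subvec X (insert j s)) _ hinj

lemma ent_pair_xv (t : Finset (Fin n)) (j : Fin n) :
    ent p (fun ω => (X j ω, subvec X t ω)) = vecH p X (insert j t) := by
  have hinj : Function.Injective
      (fun (v : (i : {k // k ∈ insert j t}) → α i.1) =>
        (v ⟨j, Finset.mem_insert_self j t⟩,
         (fun i => v ⟨i.1, Finset.mem_insert_of_mem i.2⟩ : (i : {k // k ∈ t}) → α i.1))) := by
    intro v w h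
    funext i
    rcases Finset.mem_insert.mp i.2 with hi | hi
    · have hij : i = ⟨j, Finset.mem_insert_self j t⟩ := Subtype.ext hi
      rw [hij]
      exact congrArg Prod.fst h
    · exact congrFun (congrArg Prod.snd h) ⟨i.1, hi⟩
  exact ent_comp p (subvec X (insert j t)) _ hinj

lemma ent_triple (s t : Finset (Fin n)) (j : Fin n) :
    ent p (fun ω => ((subvec X s ω, X j ω), subvec X t ω)) = vecH p X (insert j (s ∪ t)) := by
  have hinj : Function.Injective
      (fun (v : (i : {k // k ∈ insert j (s ∪ t)}) → α i.1) =>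
        (((fun i => v ⟨i.1, Finset.mem_insert_of_mem (Finset.mem_union_left t i.2)⟩ :
            (i : {k // k ∈ s}) → α i.1),
          v ⟨j, Finset.mem_insert_self j (s ∪ t)⟩),
         (fun i => v ⟨i.1, Finset.mem_insert_of_mem (Finset.mem_union_right s i.2)⟩ :
            (i : {k // k ∈ t}) → α i.1))) := by
    intro v w h
    funext i
    rcases Finset.mem_insert.mp i.2 with hi | hi
    · have hij : i = ⟨j, Finset.mem_insert_self j (s ∪ t)⟩ := Subtype.ext hi
      rw [hij]
      exact congrArg Prod.snd (congrArg Prod.fst h)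
    · rcases Finset.mem_union.mp hi with hi' | hi'
      · exact congrFun (congrArg Prod.fst (congrArg Prod.fst h)) ⟨i.1, hi'⟩
      · exact congrFun (congrArg Prod.snd h) ⟨i.1, hi'⟩
  exact ent_comp p (subvec X (insert j (s ∪ t))) _ hinj

/-- Entropy of initial segment `{i | i.val < k}`. -/
noncomputable def loH (p : Ω → ℝ) (X : ∀ i, Ω → α i) (k : ℕ) : ℝ :=
  vecH p X (Finset.univ.filter (fun i : Fin n => i.val < k))

/-- Entropy of tail segment `{i | k ≤ i.val}`. -/
noncomputable def hiH (p : Ω → ℝ) (X : ∀ i, Ω → α i) (k : ℕ) : ℝ :=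
  vecH p X (Finset.univ.filter (fun i : Fin n => k ≤ i.val))

lemma ii_expand (j : Fin n) :
    ii p (subvec X (Finset.Iio j)) (X j) (subvec X (Finset.Ioi j)) =
      (loH p X j.val - loH p X (j.val + 1)) + (hiH p X (j.val + 1) - hiH p X j.val)
      + vecH p X Finset.univ + (ent p (X j) - vecH p X (Finset.univ \ {j})) := by
  have e1 : Finset.Iio j = Finset.univ.filter (fun i : Fin n => i.val < j.val) := by
    ext i
    simp only [Finset.mem_Iio, Finset.mem_filter, Finset.mem_univ, true_and, Fin.lt_def]
  have e2 : insert j (Finset.Iio j) = Finset.univ.filter (fun i : Fin n => i.val < j.val + 1) := by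
    ext i
    simp only [Finset.mem_insert, Finset.mem_Iio, Finset.mem_filter, Finset.mem_univ, true_and,
      Fin.lt_def, Fin.ext_iff]
    omega
  have e3 : Finset.Ioi j = Finset.univ.filter (fun i : Fin n => j.val + 1 ≤ i.val) := by
    ext i
    simp only [Finset.mem_Ioi, Finset.mem_filter, Finset.mem_univ, true_and, Fin.lt_def]
    omega
  have e4 : insert j (Finset.Ioi j) = Finset.univ.filter (fun i : Fin n => j.val ≤ i.val) := by
    ext i
    simp only [Finset.mem_insert, Finset.mem_Ioi, Finset.mem_filter, Finset.mem_univ, true_and,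
      Fin.lt_def, Fin.ext_iff]
    omega
  have e5 : Finset.Iio j ∪ Finset.Ioi j = Finset.univ \ {j} := by
    ext i
    simp only [Finset.mem_union, Finset.mem_Iio, Finset.mem_Ioi, Finset.mem_sdiff,
      Finset.mem_univ, true_and, Finset.mem_singleton, Fin.lt_def, Fin.ext_iff]
    omega
  have e6 : insert j (Finset.Iio j ∪ Finset.Ioi j) = Finset.univ := by
    ext i
    simp only [Finset.mem_insert, Finset.mem_union, Finset.mem_Iio, Finset.mem_Ioi,
      Finset.mem_univ, iff_true, Fin.lt_def, Fin.ext_iff]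
    omega
  simp only [ii, mi, cmi, cent]
  rw [ent_pair_vx p X (Finset.Iio j) j, ent_pair_vv p X (Finset.Iio j) (Finset.Ioi j),
    ent_pair_xv p X (Finset.Ioi j) j, ent_triple p X (Finset.Iio j) (Finset.Ioi j) j]
  rw [e6, e5, e2, e4, e1, e3]
  simp only [loH, hiH, vecH]
  ring

end Aux

end HOI

open HOI

/-- O-information as a sum of interaction informations. -/
theorem oinfo_eq_sum_ii {Ω : Type} [Fintype Ω] {n : ℕ} {α : Fin n → Type}
    [∀ i, Fintype (α i)] (hn : 3 ≤ n)
    (p : Ω → ℝ) (hp : ∀ ω, 0 ≤ p ω) (hp1 : ∑ ω, p ω = 1)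
    (X : ∀ i, Ω → α i) :
    Oinfo p X = ∑ j ∈ Finset.univ.filter (fun j : Fin n => j.val ≠ 0 ∧ j.val ≠ n - 1),
      ii p (subvec X (Finset.Iio j)) (X j) (subvec X (Finset.Ioi j)) := by
  classical
  set S := Finset.univ.filter (fun j : Fin n => j.val ≠ 0 ∧ j.val ≠ n - 1) with hS
  set z0 : Fin n := ⟨0, by omega⟩ with hz0
  set zl : Fin n := ⟨n - 1, by omega⟩ with hzl
  -- image of S under val
  have hval_inj : ∀ x ∈ S, ∀ y ∈ S, x.val = y.val → x = y := fun x _ y _ h => Fin.ext h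
  have himg : S.image Fin.val = Finset.Ico 1 (n - 1) := by
    ext k
    simp only [hS, Finset.mem_image, Finset.mem_filter, Finset.mem_univ, true_and,
      Finset.mem_Ico]
    constructor
    · rintro ⟨j, ⟨h1, h2⟩, rfl⟩
      have := j.2
      omega
    · rintro ⟨h1, h2⟩
      exact ⟨⟨k, by omega⟩, ⟨show k ≠ 0 by omega, show k ≠ n - 1 by omega⟩, rfl⟩
  have hsum_img : ∀ f : ℕ → ℝ, ∑ j ∈ S, f j.val = ∑ k ∈ Finset.Ico 1 (n - 1), f k := by
    intro f
    rw [← himg, Finset.sum_image hval_inj]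
  -- telescoping sums
  have hnn : n - 1 - 1 = n - 2 := by omega
  have tG : ∑ j ∈ S, (loH p X j.val - loH p X (j.val + 1)) = loH p X 1 - loH p X (n - 1) := by
    rw [hsum_img (fun k => loH p X k - loH p X (k + 1)), Finset.sum_Ico_eq_sum_range, hnn]
    have := Finset.sum_range_sub' (fun i => loH p X (1 + i)) (n - 2)
    simp only [Nat.add_zero] at this
    calc ∑ k ∈ Finset.range (n - 2), (loH p X (1 + k) - loH p X (1 + k + 1))
        = loH p X (1 + 0) - loH p X (1 + (n - 2)) := this
      _ = loH p X 1 - loH p X (n - 1) := by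
          congr 2 <;> omega
  have tK : ∑ j ∈ S, (hiH p X (j.val + 1) - hiH p X j.val) = hiH p X (n - 1) - hiH p X 1 := by
    rw [hsum_img (fun k => hiH p X (k + 1) - hiH p X k), Finset.sum_Ico_eq_sum_range, hnn]
    have := Finset.sum_range_sub (fun i => hiH p X (1 + i)) (n - 2)
    calc ∑ k ∈ Finset.range (n - 2), (hiH p X (1 + k + 1) - hiH p X (1 + k))
        = hiH p X (1 + (n - 2)) - hiH p X (1 + 0) := this
      _ = hiH p X (n - 1) - hiH p X 1 := by
          congr 2 <;> omega
  have hcard : S.card = n - 2 := by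
    have h1 := congrArg Finset.card himg
    rw [Finset.card_image_of_injOn (fun x hx y hy h => Fin.ext h)] at h1
    rw [h1, Nat.card_Ico]
    omega
  have tU : ∑ _j ∈ S, vecH p X Finset.univ = ((n : ℝ) - 2) * vecH p X Finset.univ := by
    rw [Finset.sum_const, hcard, nsmul_eq_mul, Nat.cast_sub (by omega : 2 ≤ n)]
    norm_num
  -- endpoint identifications
  have g1 : loH p X 1 = ent p (X z0) := by
    rw [ent_single p X z0]
    unfold loH
    congr 1
    ext i
    simp only [Finset.mem_filter, Finset.mem_univ, true_and, Finset.mem_singleton, hz0,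
      Fin.ext_iff, Fin.val_mk]
    omega
  have gl : loH p X (n - 1) = vecH p X (Finset.univ \ {zl}) := by
    unfold loH
    congr 1
    ext i
    have := i.2
    simp only [Finset.mem_filter, Finset.mem_univ, true_and, Finset.mem_sdiff,
      Finset.mem_singleton, hzl, Fin.ext_iff, Fin.val_mk]
    omega
  have k1 : hiH p X 1 = vecH p X (Finset.univ \ {z0}) := by
    unfold hiH
    congr 1
    ext i
    simp only [Finset.mem_filter, Finset.mem_univ, true_and, Finset.mem_sdiff,
      Finset.mem_singleton, hz0, Fin.ext_iff, Fin.val_mk]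
    omega
  have kl : hiH p X (n - 1) = ent p (X zl) := by
    rw [ent_single p X zl]
    unfold hiH
    congr 1
    ext i
    have := i.2
    simp only [Finset.mem_filter, Finset.mem_univ, true_and, Finset.mem_singleton, hzl,
      Fin.ext_iff, Fin.val_mk]
    omega
  -- split the full sum in Oinfo
  have hnot : Finset.univ.filter (fun j : Fin n => ¬(j.val ≠ 0 ∧ j.val ≠ n - 1)) = {z0, zl} := by
    ext i
    simp only [Finset.mem_filter, Finset.mem_univ, true_and, Finset.mem_insert,
      Finset.mem_singleton, hz0, hzl, Fin.ext_iff, Fin.val_mk, not_and, not_not, ne_eq]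
    omega
  have hz0l : z0 ≠ zl := by
    simp only [hz0, hzl, ne_eq, Fin.ext_iff, Fin.val_mk]
    omega
  have hsplit : ∑ j : Fin n, (ent p (X j) - vecH p X (Finset.univ \ {j}))
      = ∑ j ∈ S, (ent p (X j) - vecH p X (Finset.univ \ {j}))
        + ((ent p (X z0) - vecH p X (Finset.univ \ {z0}))
          + (ent p (X zl) - vecH p X (Finset.univ \ {zl}))) := by
    rw [← Finset.sum_filter_add_sum_filter_not Finset.univ
      (fun j : Fin n => j.val ≠ 0 ∧ j.val ≠ n - 1), hnot, Finset.sum_pair hz0l]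
  -- expand each summand
  have hterm : ∀ j ∈ S, ii p (subvec X (Finset.Iio j)) (X j) (subvec X (Finset.Ioi j))
      = (loH p X j.val - loH p X (j.val + 1)) + (hiH p X (j.val + 1) - hiH p X j.val)
        + vecH p X Finset.univ + (ent p (X j) - vecH p X (Finset.univ \ {j})) :=
    fun j _ => ii_expand p X j
  rw [Finset.sum_congr rfl hterm, Finset.sum_add_distrib, Finset.sum_add_distrib,
    Finset.sum_add_distrib, tG, tK, tU]
  simp only [Oinfo, ent_fullvec p X]
  rw [hsplit, g1, gl, k1, kl]
  ring
end

section
/- For finitely-supported discrete random variables X_1,...,X_n and Y with n ≥ 2, RSI(X;Y) = Σ_{j=1}^{n-1} II(X^{j-1}; X_j; Y) + II(X^{n-1}; X_n; Y), i.e. RSI(X;Y) = Σ_{j=1}^{n} II(X^{j-1}; X_j; Y) with the convention that the j=1 term is II(∅; X_1; Y) = 0. -/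
open Classical Finset Real

open HOI

/-- Entropy is invariant under injective recoding. -/
lemma ent_comp_inj {Ω α γ : Type} [Fintype Ω] [Fintype α] [Fintype γ] (p : Ω → ℝ) (X : Ω → α)
    (f : α → γ) (hf : Function.Injective f) :
    ent p (fun ω => f (X ω)) = ent p X := by
  unfold ent
  rw [← Finset.sum_subset (Finset.subset_univ (Finset.univ.image f))]
  · rw [Finset.sum_image (fun a _ b _ h => hf h)]
    refine Finset.sum_congr rfl fun a _ => ?_
    congr 1
    unfold pdist
    refine Finset.sum_congr rfl fun ω _ => ?_
    simp [hf.eq_iff]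
  · intro c _ hc
    have h0 : pdist p (fun ω => f (X ω)) c = 0 := by
      unfold pdist
      refine Finset.sum_eq_zero fun ω _ => ?_
      have hne : f (X ω) ≠ c := fun h => hc (Finset.mem_image.mpr ⟨X ω, Finset.mem_univ _, h⟩)
      simp [hne]
    rw [h0, Real.negMulLog_zero]

/-- Entropy of an (essentially) constant random variable is zero. -/
lemma ent_allEq {Ω α : Type} [Fintype Ω] [Fintype α] (p : Ω → ℝ) (hp1 : ∑ ω, p ω = 1)
    (X : Ω → α) (h : ∀ ω a, X ω = a) : ent p X = 0 := by
  unfold ent pdist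
  have key : ∀ a : α, (∑ ω, if X ω = a then p ω else 0) = 1 := by
    intro a
    rw [← hp1]
    exact Finset.sum_congr rfl fun ω _ => by simp [h ω a]
  simp [key]

/-- The set of indices below `k`. -/
def lowSet (n k : ℕ) : Finset (Fin n) := Finset.filter (fun i => (i : ℕ) < k) Finset.univ

lemma mem_lowSet {n k : ℕ} {i : Fin n} : i ∈ lowSet n k ↔ (i : ℕ) < k := by
  simp [lowSet]

/-- Entropy of the initial segment. -/
noncomputable def entA {Ω : Type} [Fintype Ω] {n : ℕ} {α : Fin n → Type} [∀ i, Fintype (α i)]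
    (p : Ω → ℝ) (X : ∀ i, Ω → α i) (k : ℕ) : ℝ :=
  ent p (subvec X (lowSet n k))

/-- Entropy of the initial segment joined with `Y`. -/
noncomputable def entB {Ω β : Type} [Fintype Ω] [Fintype β] {n : ℕ} {α : Fin n → Type}
    [∀ i, Fintype (α i)] (p : Ω → ℝ) (X : ∀ i, Ω → α i) (Y : Ω → β) (k : ℕ) : ℝ :=
  ent p (fun ω => (subvec X (lowSet n k) ω, Y ω))

/-- RSI as a sum of interaction informations (the first term,
`II(∅; X_1; Y)`, vanishes). -/
theorem rsi_eq_sum_ii {Ω β : Type} [Fintype Ω] [Fintype β] {n : ℕ}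
    {α : Fin n → Type} [∀ i, Fintype (α i)] (hn : 2 ≤ n)
    (p : Ω → ℝ) (hp : ∀ ω, 0 ≤ p ω) (hp1 : ∑ ω, p ω = 1)
    (X : ∀ i, Ω → α i) (Y : Ω → β) :
    RSI p X Y = ∑ j : Fin n, ii p (subvec X (Finset.Iio j)) (X j) Y := by
  classical
  -- boundary values
  have hA0 : entA p X 0 = 0 := by
    refine ent_allEq p hp1 _ fun ω a => funext fun i => ?_
    exact absurd (mem_lowSet.mp i.2) (Nat.not_lt_zero _)
  have hB0 : entB p X Y 0 = ent p Y := by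
    have hf : Function.Injective
        (fun y : β => ((fun i : {i // i ∈ lowSet n 0} =>
          absurd (mem_lowSet.mp i.2) (Nat.not_lt_zero _) : (i : {i // i ∈ lowSet n 0}) → α i.1),
          y)) := fun y y' h => congrArg Prod.snd h
    have heq : (fun ω => (subvec X (lowSet n 0) ω, Y ω))
        = fun ω => ((fun i : {i // i ∈ lowSet n 0} =>
          absurd (mem_lowSet.mp i.2) (Nat.not_lt_zero _) : (i : {i // i ∈ lowSet n 0}) → α i.1),
          Y ω) := by
      funext ω
      refine congrArg (fun z => (z, Y ω)) ?_
      funext i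
      exact absurd (mem_lowSet.mp i.2) (Nat.not_lt_zero _)
    show ent p (fun ω => (subvec X (lowSet n 0) ω, Y ω)) = ent p Y
    rw [heq]
    exact ent_comp_inj p Y _ hf
  have hAn : entA p X n = ent p (fullvec X) := by
    have hf : Function.Injective
        (fun (g : (i : {i // i ∈ lowSet n n}) → α i.1) (i : Fin n) =>
          g ⟨i, mem_lowSet.mpr i.isLt⟩) := by
      intro g g' h
      funext ⟨i, hi⟩
      exact congrFun h i
    exact (ent_comp_inj p (subvec X (lowSet n n)) _ hf).symm
  have hBn : entB p X Y n = ent p (fun ω => (fullvec X ω, Y ω)) := by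
    have hf : Function.Injective
        (fun (q : ((i : {i // i ∈ lowSet n n}) → α i.1) × β) =>
          ((fun i : Fin n => q.1 ⟨i, mem_lowSet.mpr i.isLt⟩, q.2) : (∀ i, α i) × β)) := by
      intro q q' h
      obtain ⟨g, y⟩ := q
      obtain ⟨g', y'⟩ := q'
      simp only [Prod.mk.injEq] at h ⊢
      refine ⟨?_, h.2⟩
      funext ⟨i, hi⟩
      exact congrFun h.1 i
    exact (ent_comp_inj p (fun ω => (subvec X (lowSet n n) ω, Y ω)) _ hf).symm
  -- step values
  have hpair : ∀ j : Fin n,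
      ent p (fun ω => (subvec X (lowSet n (j : ℕ)) ω, X j ω)) = entA p X ((j : ℕ) + 1) := by
    intro j
    have hf : Function.Injective
        (fun (g : (i : {i // i ∈ lowSet n ((j : ℕ) + 1)}) → α i.1) =>
          ((fun i : {i // i ∈ lowSet n (j : ℕ)} =>
              g ⟨i.1, mem_lowSet.mpr (Nat.lt_succ_of_lt (mem_lowSet.mp i.2))⟩,
            g ⟨j, mem_lowSet.mpr (Nat.lt_succ_self _)⟩) :
            ((i : {i // i ∈ lowSet n (j : ℕ)}) → α i.1) × α j)) := by
      intro g g' h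
      funext ⟨i, hi⟩
      rcases Nat.lt_succ_iff_lt_or_eq.mp (mem_lowSet.mp hi) with h' | h'
      · exact congrFun (congrArg Prod.fst h) ⟨i, mem_lowSet.mpr h'⟩
      · have hij : i = j := Fin.ext h'
        subst hij
        exact congrArg Prod.snd h
    exact ent_comp_inj p (subvec X (lowSet n ((j : ℕ) + 1))) _ hf
  have htrip : ∀ j : Fin n,
      ent p (fun ω => ((subvec X (lowSet n (j : ℕ)) ω, X j ω), Y ω))
        = entB p X Y ((j : ℕ) + 1) := by
    intro j
    have hf : Function.Injective
        (fun (q : ((i : {i // i ∈ lowSet n ((j : ℕ) + 1)}) → α i.1) × β) =>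
          (((fun i : {i // i ∈ lowSet n (j : ℕ)} =>
              q.1 ⟨i.1, mem_lowSet.mpr (Nat.lt_succ_of_lt (mem_lowSet.mp i.2))⟩,
            q.1 ⟨j, mem_lowSet.mpr (Nat.lt_succ_self _)⟩),
            q.2) :
            (((i : {i // i ∈ lowSet n (j : ℕ)}) → α i.1) × α j) × β)) := by
      intro q q' h
      obtain ⟨g, y⟩ := q
      obtain ⟨g', y'⟩ := q'
      simp only [Prod.mk.injEq] at h ⊢
      refine ⟨?_, h.2⟩
      funext ⟨i, hi⟩
      rcases Nat.lt_succ_iff_lt_or_eq.mp (mem_lowSet.mp hi) with h' | h'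
      · exact congrFun h.1.1 ⟨i, mem_lowSet.mpr h'⟩
      · have hij : i = j := Fin.ext h'
        subst hij
        exact h.1.2
    exact ent_comp_inj p (fun ω => (subvec X (lowSet n ((j : ℕ) + 1)) ω, Y ω)) _ hf
  -- per-term identity
  have hterm : ∀ j : Fin n, ii p (subvec X (Finset.Iio j)) (X j) Y
      = (entA p X (j : ℕ) - entA p X ((j : ℕ) + 1))
        + (entB p X Y ((j : ℕ) + 1) - entB p X Y (j : ℕ)) + mi p (X j) Y := by
    intro j
    have hIio : Finset.Iio j = lowSet n (j : ℕ) := by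
      ext i
      rw [Finset.mem_Iio, mem_lowSet]
      exact Fin.lt_def
    rw [hIio]
    simp only [ii, mi, cmi, cent]
    rw [hpair j, htrip j]
    rw [show ent p (subvec X (lowSet n (j : ℕ))) = entA p X (j : ℕ) from rfl]
    rw [show ent p (fun ω => (subvec X (lowSet n (j : ℕ)) ω, Y ω)) = entB p X Y (j : ℕ) from rfl]
    ring
  have hsum : ∑ j : Fin n, ii p (subvec X (Finset.Iio j)) (X j) Y
      = (entA p X 0 - entA p X n) + (entB p X Y n - entB p X Y 0)
        + ∑ j : Fin n, mi p (X j) Y := by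
    rw [Finset.sum_congr rfl fun j _ => hterm j]
    rw [Finset.sum_add_distrib, Finset.sum_add_distrib]
    congr 1
    congr 1
    · rw [Fin.sum_univ_eq_sum_range (fun k => entA p X k - entA p X (k + 1)) n]
      exact Finset.sum_range_sub' (fun k => entA p X k) n
    · rw [Fin.sum_univ_eq_sum_range (fun k => entB p X Y (k + 1) - entB p X Y k) n]
      exact Finset.sum_range_sub (fun k => entB p X Y k) n
  rw [hsum, hA0, hB0, hAn, hBn]
  simp only [RSI, mi]
  ring
end

section
/- For a random vector X = (X_1,...,X_n) of discrete random variables each taking values in alphabets of size at most K, with n ≥ 2, the O-information is bounded: -(n-2) log K ≤ Ω(X) ≤ (n-2) log K. -/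
open Classical Finset Real

open HOI

/-!
Let `h S` be the joint entropy of the components indexed by `S`. Gibbs' inequality makes `h` a
polymatroid (normalized, monotone, submodular), and `Ω = TC - DTC` reads
`Ω = ∑ⱼ h {j} + ∑ⱼ (h univ - h (univ \ {j})) - 2 h univ`. Fix indices `j₀ ≠ j₁`. Telescoping
submodularity gives `∑_{j ≠ j₀} (h univ - h (univ \ {j})) ≤ h univ - h {j₀}`, and with
`h {j₁} ≤ h (univ \ {j₀})` this yields `Ω ≤ ∑_{j ≠ j₀, j₁} h {j}`. Dropping the nonnegative terms
`h univ - h (univ \ {j})`, `j ≠ j₀, j₁`, and bounding `h (univ \ {j})` by `∑_{k ≠ j} h {k}` yields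
`Ω ≥ -∑_{j ≠ j₀, j₁} h {j}`. Finally `h {j} ≤ log K`.
-/

namespace HOI

lemma negMulLog_add_mul_log_le {w q : ℝ} (hw : 0 ≤ w) (hq : 0 ≤ q) (hwq : 0 < w → 0 < q) :
    negMulLog w + w * log q ≤ q - w := by
  rcases hw.eq_or_lt with rfl | hw
  · simpa using hq
  have hq := hwq hw
  have := log_le_sub_one_of_pos (div_pos hq hw)
  rw [log_div hq.ne' hw.ne'] at this
  calc negMulLog w + w * log q = w * (log q - log w) := by rw [negMulLog]; ring
    _ ≤ w * (q / w - 1) := mul_le_mul_of_nonneg_left this hw.le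
    _ = q - w := by field_simp

section Distribution

variable {Ω α β γ : Type} [Fintype Ω] {p : Ω → ℝ}

lemma pdist_nonneg (hp : ∀ ω, 0 ≤ p ω) (X : Ω → α) (a : α) : 0 ≤ pdist p X a :=
  sum_nonneg fun ω _ => ite_nonneg (hp ω) le_rfl

lemma le_pdist_apply (hp : ∀ ω, 0 ≤ p ω) (X : Ω → α) (ω : Ω) : p ω ≤ pdist p X (X ω) := by
  have := single_le_sum (f := fun ω' => if X ω' = X ω then p ω' else 0)
    (fun ω' _ => ite_nonneg (hp ω') le_rfl) (mem_univ ω)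
  simpa [pdist] using this

lemma sum_pdist_mul [Fintype α] (X : Ω → α) (g : α → ℝ) :
    ∑ a, pdist p X a * g a = ∑ ω, p ω * g (X ω) := by
  simp only [pdist, sum_mul, ite_mul, zero_mul]
  rw [sum_comm]
  simp

lemma sum_pdist [Fintype α] (hp1 : ∑ ω, p ω = 1) (X : Ω → α) : ∑ a, pdist p X a = 1 := by
  simpa [hp1] using sum_pdist_mul (p := p) X 1

lemma sum_pdist_prod_fst [Fintype α] (A : Ω → α) (C : Ω → γ) (c : γ) :
    ∑ a, pdist p (fun ω => (A ω, C ω)) (a, c) = pdist p C c := by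
  simp only [pdist, Prod.mk.injEq, ite_and]
  rw [sum_comm]
  simp

lemma pdist_le_pdist_comp (hp : ∀ ω, 0 ≤ p ω) (f : α → β) (X : Ω → α) (a : α) :
    pdist p X a ≤ pdist p (fun ω => f (X ω)) (f a) :=
  sum_le_sum fun ω _ => by
    by_cases h : X ω = a
    · simp [h]
    · simp only [h, if_false]
      exact ite_nonneg (hp ω) le_rfl

lemma pdist_comp_of_injective {f : α → β} (hf : Function.Injective f) (X : Ω → α) (a : α) :
    pdist p (fun ω => f (X ω)) (f a) = pdist p X a := by
  simp only [pdist, hf.eq_iff]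

end Distribution

section Entropy

variable {Ω α β γ : Type} [Fintype Ω] [Fintype α] [Fintype β] [Fintype γ] {p : Ω → ℝ}

lemma ent_eq_neg_sum_mul_log (X : Ω → α) :
    ent p X = -∑ ω, p ω * log (pdist p X (X ω)) := by
  rw [← sum_pdist_mul X fun a => log (pdist p X a), ent, ← sum_neg_distrib]
  simp only [negMulLog, neg_mul]

/-- Gibbs' inequality. -/
theorem ent_le_neg_sum_mul_log (hp : ∀ ω, 0 ≤ p ω) (hp1 : ∑ ω, p ω = 1) (X : Ω → α)
    {q : α → ℝ} (hq : ∀ a, 0 ≤ q a) (hq1 : ∑ a, q a ≤ 1)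
    (hqX : ∀ ω, 0 < p ω → 0 < q (X ω)) :
    ent p X ≤ -∑ ω, p ω * log (q (X ω)) := by
  have hpos : ∀ a, 0 < pdist p X a → 0 < q a := by
    intro a ha
    by_contra hqa
    refine ha.ne' (sum_eq_zero fun ω _ => ?_)
    split_ifs with h
    · subst h
      exact (hp ω).eq_or_lt.elim Eq.symm fun hω => absurd (hqX ω hω) hqa
    · rfl
  have key : ∑ a, (negMulLog (pdist p X a) + pdist p X a * log (q a))
      ≤ ∑ a, (q a - pdist p X a) :=
    sum_le_sum fun a _ => negMulLog_add_mul_log_le (pdist_nonneg hp X a) (hq a) (hpos a)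
  rw [sum_add_distrib, sum_sub_distrib, sum_pdist hp1, sum_pdist_mul] at key
  rw [ent]
  linarith

theorem ent_le_log_card (hp : ∀ ω, 0 ≤ p ω) (hp1 : ∑ ω, p ω = 1) (X : Ω → α) :
    ent p X ≤ log (Fintype.card α) := by
  have hcard : ∀ ω, (0 : ℝ) < Fintype.card α := fun ω =>
    Nat.cast_pos.mpr (Fintype.card_pos_iff.mpr ⟨X ω⟩)
  calc ent p X ≤ -∑ ω, p ω * log (Fintype.card α : ℝ)⁻¹ :=
        ent_le_neg_sum_mul_log hp hp1 X (q := fun _ => (Fintype.card α : ℝ)⁻¹)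
          (fun _ => inv_nonneg.mpr (Nat.cast_nonneg _))
          (by simpa [card_univ] using mul_inv_le_one)
          (fun ω _ => inv_pos.mpr (hcard ω))
    _ = log (Fintype.card α) := by rw [← sum_mul, hp1, log_inv]; ring

lemma ent_eq_zero_of_subsingleton [Subsingleton α] (hp1 : ∑ ω, p ω = 1) (X : Ω → α) :
    ent p X = 0 := by
  have h : ∀ a, pdist p X a = 1 := fun a => by simp [pdist, Subsingleton.elim _ a, hp1]
  simp [ent, h]

theorem ent_comp_le (hp : ∀ ω, 0 ≤ p ω) (f : α → β) (X : Ω → α) :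
    ent p (fun ω => f (X ω)) ≤ ent p X := by
  rw [ent_eq_neg_sum_mul_log, ent_eq_neg_sum_mul_log, neg_le_neg_iff]
  refine sum_le_sum fun ω _ => ?_
  rcases (hp ω).eq_or_lt with h | h
  · simp [← h]
  · exact mul_le_mul_of_nonneg_left (log_le_log (h.trans_le (le_pdist_apply hp X ω))
      (pdist_le_pdist_comp hp f X (X ω))) h.le

theorem ent_comp_of_injective {f : α → β} (hf : Function.Injective f) (X : Ω → α) :
    ent p (fun ω => f (X ω)) = ent p X := by
  simp only [ent_eq_neg_sum_mul_log, pdist_comp_of_injective hf]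

theorem ent_prod_add_le (hp : ∀ ω, 0 ≤ p ω) (hp1 : ∑ ω, p ω = 1)
    (A : Ω → α) (B : Ω → β) (C : Ω → γ) :
    ent p (fun ω => (A ω, B ω, C ω)) + ent p C
      ≤ ent p (fun ω => (A ω, C ω)) + ent p (fun ω => (B ω, C ω)) := by
  set pAC := pdist p (fun ω => (A ω, C ω))
  set pBC := pdist p (fun ω => (B ω, C ω))
  set pC := pdist p C
  -- the Markov chain `A - C - B` with the same pairwise marginals
  let q : α × β × γ → ℝ := fun x => pAC (x.1, x.2.2) * pBC (x.2.1, x.2.2) / pC x.2.2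
  have hq : ∀ x, 0 ≤ q x := fun x =>
    div_nonneg (mul_nonneg (pdist_nonneg hp _ _) (pdist_nonneg hp _ _)) (pdist_nonneg hp _ _)
  have hq1 : ∑ x, q x = 1 := by
    calc ∑ x, q x = ∑ c, (∑ a, pAC (a, c)) * (∑ b, pBC (b, c)) / pC c := by
          simp only [q, Fintype.sum_prod_type, sum_mul, mul_sum, sum_div]
          exact (sum_comm.trans (sum_congr rfl fun _ _ => sum_comm)).trans sum_comm
      _ = 1 := by simp only [pAC, pBC, sum_pdist_prod_fst, mul_self_div_self, pC, sum_pdist hp1]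
  have hpos : ∀ ω, 0 < p ω → 0 < pAC (A ω, C ω) ∧ 0 < pBC (B ω, C ω) ∧ 0 < pC (C ω) :=
    fun ω h => ⟨h.trans_le (le_pdist_apply hp _ ω), h.trans_le (le_pdist_apply hp _ ω),
      h.trans_le (le_pdist_apply hp _ ω)⟩
  have hlog : ∀ ω, p ω * log (q (A ω, B ω, C ω)) = p ω * log (pAC (A ω, C ω))
      + p ω * log (pBC (B ω, C ω)) - p ω * log (pC (C ω)) := by
    intro ω
    rcases (hp ω).eq_or_lt with h | h
    · simp [← h]
    obtain ⟨h1, h2, h3⟩ := hpos ω h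
    simp only [q]
    rw [log_div (by positivity) h3.ne', log_mul h1.ne' h2.ne']
    ring
  have gibbs := ent_le_neg_sum_mul_log hp hp1 (fun ω => (A ω, B ω, C ω)) hq hq1.le
    fun ω h => by obtain ⟨h1, h2, h3⟩ := hpos ω h; positivity
  simp only [hlog, sum_add_distrib, sum_sub_distrib] at gibbs
  rw [ent_eq_neg_sum_mul_log (fun ω => (A ω, C ω)), ent_eq_neg_sum_mul_log (fun ω => (B ω, C ω)),
    ent_eq_neg_sum_mul_log C]
  linarith

end Entropy

structure IsPolymatroid {ι : Type*} [DecidableEq ι] (f : Finset ι → ℝ) : Prop where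
  empty : f ∅ = 0
  mono : Monotone f
  union_add_inter_le : ∀ s t, f (s ∪ t) + f (s ∩ t) ≤ f s + f t

def setOinfo {ι : Type*} [Fintype ι] [DecidableEq ι] (f : Finset ι → ℝ) : ℝ :=
  ((Fintype.card ι : ℝ) - 2) * f univ + ∑ j, (f {j} - f (univ \ {j}))

-- `Ω = TC - DTC`
lemma setOinfo_eq_sub {ι : Type*} [Fintype ι] [DecidableEq ι] (f : Finset ι → ℝ) :
    setOinfo f = (∑ j, f {j} - f univ) - (f univ - ∑ j, (f univ - f (univ \ {j}))) := by
  simp only [setOinfo, sum_sub_distrib, sum_const, card_univ, nsmul_eq_mul]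
  ring

lemma sum_univ_eq_sum_sdiff_pair_add {ι M : Type*} [Fintype ι] [DecidableEq ι]
    [AddCommMonoid M] {j₀ j₁ : ι} (hne : j₀ ≠ j₁) (g : ι → M) :
    ∑ j, g j = ∑ j ∈ univ \ {j₀, j₁}, g j + (g j₀ + g j₁) := by
  rw [← sum_sdiff (subset_univ {j₀, j₁}), sum_pair hne]

namespace IsPolymatroid

variable {ι : Type*} [DecidableEq ι] {f : Finset ι → ℝ}

lemma le_sum_singleton (hf : IsPolymatroid f) (s : Finset ι) : f s ≤ ∑ j ∈ s, f {j} := by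
  induction s using Finset.induction_on with
  | empty => simp [hf.empty]
  | insert k s hk ih =>
    have := hf.union_add_inter_le {k} s
    rw [← insert_eq, singleton_inter_of_notMem hk, hf.empty] at this
    rw [sum_insert hk]
    linarith

lemma insert_sub_le_insert_sub (hf : IsPolymatroid f) {s t : Finset ι} {k : ι} (hst : s ⊆ t)
    (hk : k ∉ t) : f (insert k t) - f t ≤ f (insert k s) - f s := by
  have := hf.union_add_inter_le (insert k s) t
  rw [insert_union, union_eq_right.mpr hst, insert_inter_of_notMem hk,
    inter_eq_left.mpr hst] at this
  linarith

variable [Fintype ι]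

lemma sum_sub_sdiff_singleton_le (hf : IsPolymatroid f) {j₀ : ι} {s : Finset ι} (hj₀ : j₀ ∉ s) :
    ∑ j ∈ s, (f univ - f (univ \ {j})) ≤ f (insert j₀ s) - f {j₀} := by
  induction s using Finset.induction_on with
  | empty => simp
  | insert k s hk ih =>
    rw [mem_insert, not_or] at hj₀
    have hsub : insert j₀ s ⊆ univ \ {k} := by simp [subset_iff, hk, hj₀.1]
    have hstep := hf.insert_sub_le_insert_sub hsub (k := k) (by simp)
    rw [show insert k (univ \ {k}) = univ by simp] at hstep
    rw [sum_insert hk, insert_comm]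
    linarith [ih hj₀.2]

lemma setOinfo_le (hf : IsPolymatroid f) {j₀ j₁ : ι} (hne : j₀ ≠ j₁) :
    setOinfo f ≤ ∑ j ∈ univ \ {j₀, j₁}, f {j} := by
  have hchain := hf.sum_sub_sdiff_singleton_le (s := univ \ {j₀}) (j₀ := j₀) (by simp)
  rw [show insert j₀ (univ \ {j₀}) = univ by simp] at hchain
  have hj₁ : f {j₁} ≤ f (univ \ {j₀}) := hf.mono (by simpa using hne.symm)
  rw [setOinfo_eq_sub, sum_univ_eq_sum_sdiff_pair_add hne,
    sum_eq_add_sum_sdiff_singleton_of_mem (mem_univ j₀) fun j => f univ - f (univ \ {j})]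
  linarith

lemma neg_le_setOinfo (hf : IsPolymatroid f) {j₀ j₁ : ι} (hne : j₀ ≠ j₁) :
    -∑ j ∈ univ \ {j₀, j₁}, f {j} ≤ setOinfo f := by
  have hcompl : ∀ j, f (univ \ {j}) + f {j} ≤ ∑ j, f {j} := fun j => by
    rw [sum_eq_add_sum_sdiff_singleton_of_mem (mem_univ j)]
    linarith [hf.le_sum_singleton (univ \ {j})]
  have hrest : 0 ≤ ∑ j ∈ univ \ {j₀, j₁}, (f univ - f (univ \ {j})) :=
    sum_nonneg fun j _ => sub_nonneg.mpr (hf.mono (subset_univ _))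
  rw [setOinfo_eq_sub, sum_univ_eq_sum_sdiff_pair_add hne fun j => f univ - f (univ \ {j})]
  rw [sum_univ_eq_sum_sdiff_pair_add hne] at hcompl ⊢
  linarith [hcompl j₀, hcompl j₁]

theorem abs_setOinfo_le (hf : IsPolymatroid f) (hcard : 2 ≤ Fintype.card ι) {L : ℝ}
    (hL : ∀ j, f {j} ≤ L) : |setOinfo f| ≤ ((Fintype.card ι : ℝ) - 2) * L := by
  obtain ⟨j₀, j₁, hne⟩ := Fintype.exists_pair_of_one_lt_card hcard
  have hsum : ∑ j ∈ univ \ {j₀, j₁}, f {j} ≤ ((Fintype.card ι : ℝ) - 2) * L :=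
    calc ∑ j ∈ univ \ {j₀, j₁}, f {j} ≤ ∑ j ∈ univ \ {j₀, j₁}, L := sum_le_sum fun j _ => hL j
      _ = ((Fintype.card ι : ℝ) - 2) * L := by
        rw [sum_const, card_sdiff_of_subset (subset_univ _), card_pair hne, card_univ,
          nsmul_eq_mul, Nat.cast_sub hcard, Nat.cast_two]
  exact abs_le.mpr
    ⟨(neg_le_neg hsum).trans (hf.neg_le_setOinfo hne), (hf.setOinfo_le hne).trans hsum⟩

end IsPolymatroid

section VectorEntropy

variable {Ω : Type} [Fintype Ω] {p : Ω → ℝ} {n : ℕ} {α : Fin n → Type} [∀ i, Fintype (α i)]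

lemma vecH_univ (X : ∀ i, Ω → α i) : vecH p X univ = ent p (fullvec X) := by
  have hres : Function.Injective
      fun (v : ∀ i, α i) (i : {j // j ∈ (univ : Finset (Fin n))}) => v i.1 :=
    fun v w h => funext fun i => congrFun h ⟨i, mem_univ i⟩
  exact ent_comp_of_injective hres (fullvec X)

lemma vecH_singleton (X : ∀ i, Ω → α i) (j : Fin n) : vecH p X {j} = ent p (X j) := by
  have heval : Function.Injective fun v : (i : {i // i ∈ ({j} : Finset (Fin n))}) → α i.1 =>
      v ⟨j, mem_singleton_self j⟩ := fun v w h => funext fun ⟨i, hi⟩ => by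
    obtain rfl := mem_singleton.mp hi
    exact h
  exact (ent_comp_of_injective heval (subvec X {j})).symm

lemma oinfo_eq_setOinfo (X : ∀ i, Ω → α i) : Oinfo p X = setOinfo (vecH p X) := by
  simp only [Oinfo, setOinfo, Fintype.card_fin, vecH_univ, vecH_singleton]

lemma vecH_union_add_inter_le (hp : ∀ ω, 0 ≤ p ω) (hp1 : ∑ ω, p ω = 1) (X : ∀ i, Ω → α i)
    (s t : Finset (Fin n)) :
    vecH p X (s ∪ t) + vecH p X (s ∩ t) ≤ vecH p X s + vecH p X t := by
  let glue (v : ((i : {j // j ∈ s}) → α i.1) × ((i : {j // j ∈ t}) → α i.1) ×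
      ((i : {j // j ∈ s ∩ t}) → α i.1)) (i : {j // j ∈ s ∪ t}) : α i.1 :=
    if h : i.1 ∈ s then v.1 ⟨i.1, h⟩ else v.2.1 ⟨i.1, (mem_union.mp i.2).resolve_left h⟩
  have hglue : subvec X (s ∪ t)
      = fun ω => glue (subvec X s ω, subvec X t ω, subvec X (s ∩ t) ω) := by
    funext ω i
    simp only [glue]
    split_ifs <;> rfl
  have hunion : ent p (subvec X (s ∪ t))
      ≤ ent p (fun ω => (subvec X s ω, subvec X t ω, subvec X (s ∩ t) ω)) := by
    rw [hglue]
    exact ent_comp_le hp glue _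
  have hs : ent p (fun ω => (subvec X s ω, subvec X (s ∩ t) ω)) ≤ ent p (subvec X s) :=
    ent_comp_le hp (fun v : (i : {j // j ∈ s}) → α i.1 =>
      (v, fun i : {j // j ∈ s ∩ t} => v ⟨i.1, (mem_inter.mp i.2).1⟩)) (subvec X s)
  have ht : ent p (fun ω => (subvec X t ω, subvec X (s ∩ t) ω)) ≤ ent p (subvec X t) :=
    ent_comp_le hp (fun v : (i : {j // j ∈ t}) → α i.1 =>
      (v, fun i : {j // j ∈ s ∩ t} => v ⟨i.1, (mem_inter.mp i.2).2⟩)) (subvec X t)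
  have hssa := ent_prod_add_le hp hp1 (subvec X s) (subvec X t) (subvec X (s ∩ t))
  simp only [vecH]
  linarith

theorem isPolymatroid_vecH (hp : ∀ ω, 0 ≤ p ω) (hp1 : ∑ ω, p ω = 1) (X : ∀ i, Ω → α i) :
    IsPolymatroid (vecH p X) where
  empty := ent_eq_zero_of_subsingleton hp1 _
  mono s t hst :=
    ent_comp_le hp (fun (v : (i : {j // j ∈ t}) → α i.1) (i : {j // j ∈ s}) => v ⟨i.1, hst i.2⟩)
      (subvec X t)
  union_add_inter_le := vecH_union_add_inter_le hp hp1 X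

end VectorEntropy

end HOI

/-- bounds on the O-information. -/
theorem oinfo_bounds {Ω : Type} [Fintype Ω] {n : ℕ} {α : Fin n → Type}
    [∀ i, Fintype (α i)] (hn : 2 ≤ n) (K : ℕ) (hK : ∀ i, Fintype.card (α i) ≤ K)
    (p : Ω → ℝ) (hp : ∀ ω, 0 ≤ p ω) (hp1 : ∑ ω, p ω = 1)
    (X : ∀ i, Ω → α i) :
    -(((n : ℝ) - 2) * Real.log K) ≤ Oinfo p X
    ∧ Oinfo p X ≤ ((n : ℝ) - 2) * Real.log K := by
  have hL : ∀ j, vecH p X {j} ≤ log K := fun j => by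
    rw [vecH_singleton]
    refine (ent_le_log_card hp hp1 (X j)).trans ?_
    rcases (Fintype.card (α j)).eq_zero_or_pos with h | h
    · simpa [h] using log_natCast_nonneg K
    · exact log_le_log (by exact_mod_cast h) (by exact_mod_cast hK j)
  have hbound := (isPolymatroid_vecH hp hp1 X).abs_setOinfo_le (by simpa using hn) hL
  rw [Fintype.card_fin, ← oinfo_eq_setOinfo] at hbound
  exact abs_le.mp hbound
end

section
/- Let X_1,...,X_{n-1} be i.i.d. uniform Bernoulli random variables and X_n = X_1 + ... + X_{n-1} (mod 2), with n ≥ 3. Then Ω(X_1,...,X_n) = -(n-2) log 2. -/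
open Classical Finset Real

open HOI

section Aux
set_option linter.unusedSectionVars false
variable {Ω α β : Type} [Fintype Ω] [Fintype α] [Fintype β] [DecidableEq β]

lemma pdist_comp (p : Ω → ℝ) (T : Ω → α) (g : α → β) (b : β) :
    pdist p (fun ω => g (T ω)) b = ∑ a, if g a = b then pdist p T a else 0 := by
  simp only [pdist]
  have : ∀ (a : α), (if g a = b then (∑ ω, if T ω = a then p ω else 0) else 0)
      = ∑ ω, if T ω = a then (if g a = b then p ω else 0) else 0 := by
    intro a; split_ifs with h
    · rfl
    · simp
  rw [Finset.sum_congr rfl (fun a _ => this a), Finset.sum_comm]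
  refine Finset.sum_congr rfl fun ω _ => ?_
  rw [Finset.sum_ite_eq Finset.univ (T ω) (fun a => if g a = b then p ω else 0)]
  simp

lemma pdist_comp_const (p : Ω → ℝ) (T : Ω → α) (g : α → β) (c : ℝ)
    (hc : ∀ a, pdist p T a = c) (b : β) :
    pdist p (fun ω => g (T ω)) b = c * (Finset.univ.filter fun a => g a = b).card := by
  rw [pdist_comp]
  simp only [hc]
  rw [← Finset.sum_filter, Finset.sum_const, nsmul_eq_mul, mul_comm]

lemma ent_comp_inj_s13 (p : Ω → ℝ) (T : Ω → α) (g : α → β) (c : ℝ)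
    (hg : Function.Injective g) (hc : ∀ a, pdist p T a = c) :
    ent p (fun ω => g (T ω)) = (Fintype.card α : ℝ) * Real.negMulLog c := by
  simp only [ent, pdist_comp_const p T g c hc]
  have key : ∀ b : β, Real.negMulLog (c * (Finset.univ.filter fun a => g a = b).card)
      = if b ∈ Finset.univ.image g then Real.negMulLog c else 0 := by
    intro b
    by_cases hb : b ∈ Finset.univ.image g
    · rw [if_pos hb]
      obtain ⟨a0, _, ha0⟩ := Finset.mem_image.mp hb
      have : (Finset.univ.filter fun a => g a = b) = {a0} := by
        ext a
        simp only [Finset.mem_filter, Finset.mem_univ, true_and, Finset.mem_singleton]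
        constructor
        · intro h; exact hg (h.trans ha0.symm)
        · rintro rfl; exact ha0
      rw [this]; simp
    · rw [if_neg hb]
      have : (Finset.univ.filter fun a => g a = b) = ∅ := by
        ext a
        simp only [Finset.mem_filter, Finset.mem_univ, true_and, Finset.notMem_empty,
          iff_false]
        intro h
        exact hb (Finset.mem_image.mpr ⟨a, Finset.mem_univ a, h⟩)
      rw [this]; simp [Real.negMulLog_zero]
  rw [Finset.sum_congr rfl (fun b _ => key b), Finset.sum_ite_mem, Finset.univ_inter,
    Finset.sum_const, Finset.card_image_of_injective _ hg, Finset.card_univ, nsmul_eq_mul]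

lemma fiber_twice (g : α → ZMod 2) (e : α ≃ α) (he : ∀ a, g (e a) = g a + 1) (b : ZMod 2) :
    (Finset.univ.filter fun a => g a = b).card * 2 = Fintype.card α := by
  have hbij : (Finset.univ.filter fun a => g a = b).card
      = (Finset.univ.filter fun a => g a = b + 1).card := by
    refine Finset.card_bij (fun a _ => e a) ?_ ?_ ?_
    · intro a ha
      simp only [Finset.mem_filter, Finset.mem_univ, true_and] at ha ⊢
      rw [he, ha]
    · intro a ha a' ha' h
      exact e.injective h
    · intro a ha
      simp only [Finset.mem_filter, Finset.mem_univ, true_and] at ha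
      refine ⟨e.symm a, ?_, by simp⟩
      simp only [Finset.mem_filter, Finset.mem_univ, true_and]
      have h1 := he (e.symm a)
      rw [e.apply_symm_apply, ha] at h1
      exact add_right_cancel h1.symm
  have hsplit := Finset.card_filter_add_card_filter_not
    (s := (Finset.univ : Finset α)) (p := fun a => g a = b)
  have hne : (Finset.univ.filter fun a => ¬ g a = b)
      = (Finset.univ.filter fun a => g a = b + 1) := by
    apply Finset.filter_congr
    intro a _
    have : ∀ x y : ZMod 2, (¬ x = y) ↔ (x = y + 1) := by decide
    simp [this]
  rw [hne, ← hbij] at hsplit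
  rw [Finset.card_univ] at hsplit
  omega

lemma ent_comp_flip (p : Ω → ℝ) (T : Ω → α) (g : α → ZMod 2) (e : α ≃ α)
    (he : ∀ a, g (e a) = g a + 1) (c : ℝ) (hc : ∀ a, pdist p T a = c)
    (k : ℕ) (hk : Fintype.card α = k * 2) :
    ent p (fun ω => g (T ω)) = 2 * Real.negMulLog (c * k) := by
  have hN : ∀ b : ZMod 2, (Finset.univ.filter fun a => g a = b).card = k := by
    intro b
    have := fiber_twice g e he b
    omega
  simp only [ent, pdist_comp_const p T g c hc, hN]
  rw [Finset.sum_const, Finset.card_univ, ZMod.card, nsmul_eq_mul]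
  norm_num

end Aux


/-- the n-bit xor system has O-information -(n-2) log 2. -/
theorem xor_oinfo {Ω : Type} [Fintype Ω] {n : ℕ} (hn : 3 ≤ n)
    (p : Ω → ℝ) (hp : ∀ ω, 0 ≤ p ω) (hp1 : ∑ ω, p ω = 1)
    (X : Fin n → Ω → ZMod 2)
    (hiid : ∀ v : (i : {j : Fin n // j ∈ Finset.univ.filter (fun j : Fin n => j.val < n - 1)}) →
        ZMod 2,
      pdist p (subvec X (Finset.univ.filter (fun j : Fin n => j.val < n - 1))) v
        = (1 / 2) ^ (n - 1))
    (hxor : ∀ ω, X ⟨n - 1, by omega⟩ ω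
        = ∑ j ∈ Finset.univ.filter (fun j : Fin n => j.val < n - 1), X j ω) :
    Oinfo p X = -(((n : ℝ) - 2) * Real.log 2) := by
  set s0 : Finset (Fin n) := Finset.univ.filter (fun j : Fin n => j.val < n - 1) with hs0def
  set lastI : Fin n := ⟨n - 1, by omega⟩ with hlastdef
  set ι := {j // j ∈ s0} with hidef
  set T : Ω → (ι → ZMod 2) := subvec X s0 with hTdef
  set c : ℝ := (1 / 2) ^ (n - 1) with hcdef
  have hc : ∀ v, pdist p T v = c := hiid
  -- basic index facts
  have hmem : ∀ j : Fin n, j ∈ s0 ↔ j ≠ lastI := by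
    intro j
    have hj := j.isLt
    simp only [hs0def, Finset.mem_filter, Finset.mem_univ, true_and, hlastdef, Ne,
      Fin.ext_iff]
    omega
  have hcard : s0.card = n - 1 := by
    have h1 : s0 = Finset.univ.erase lastI := by
      ext j
      simp [Finset.mem_erase, hmem j]
    rw [h1, Finset.card_erase_of_mem (Finset.mem_univ _), Finset.card_univ, Fintype.card_fin]
  have hcardι : Fintype.card ι = n - 1 := by
    have : Fintype.card ι = s0.card := Fintype.card_coe s0
    rw [this, hcard]
  have hcardfun : Fintype.card (ι → ZMod 2) = 2 ^ (n - 1) := by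
    rw [Fintype.card_fun, ZMod.card, hcardι]
  -- the xor identity in subtype-sum form
  have hXlast : ∀ ω, X lastI ω = ∑ k : ι, T ω k := by
    intro ω
    rw [hlastdef]
    rw [hxor ω, ← Finset.sum_coe_sort s0 (fun j => X j ω)]
    rfl
  -- representation of subvectors through T
  have hrepr : ∀ s : Finset (Fin n), subvec X s
      = fun ω => (fun (v : ι → ZMod 2) (i : {i // i ∈ s}) =>
          if h : i.1 ∈ s0 then v ⟨i.1, h⟩ else ∑ k, v k) (T ω) := by
    intro s
    funext ω i
    by_cases h : i.1 ∈ s0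
    · simp only [dif_pos h]; rfl
    · simp only [dif_neg h]
      have hi : i.1 = lastI := by
        by_contra hne
        exact h ((hmem i.1).mpr hne)
      show X i.1 ω = _
      rw [hi, hXlast ω]
  have hreprfull : fullvec X
      = fun ω => (fun (v : ι → ZMod 2) (i : Fin n) =>
          if h : i ∈ s0 then v ⟨i, h⟩ else ∑ k, v k) (T ω) := by
    funext ω i
    by_cases h : i ∈ s0
    · simp only [dif_pos h]; rfl
    · simp only [dif_neg h]
      have hi : i = lastI := by
        by_contra hne
        exact h ((hmem i).mpr hne)
      show X i ω = _
      rw [hi, hXlast ω]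
  -- arithmetic facts
  have hlog : Real.log ((1:ℝ)/2) = -Real.log 2 := by
    rw [one_div, Real.log_inv]
  have negc : Real.negMulLog c = c * (((n : ℝ) - 1) * Real.log 2) := by
    rw [Real.negMulLog, hcdef, Real.log_pow, hlog]
    have : ((n - 1 : ℕ) : ℝ) = (n : ℝ) - 1 := by
      rw [Nat.cast_sub (by omega)]; norm_num
    rw [this]
    ring
  have hpow1 : ((2 : ℝ) ^ (n - 1)) * c = 1 := by
    rw [hcdef, ← mul_pow]
    norm_num
  have hNR : ((2 ^ (n - 1) : ℕ) : ℝ) = (2 : ℝ) ^ (n - 1) := by push_cast; ring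
  -- involutions
  have hflipinv : ∀ j0 : ι, Function.Involutive
      (fun v : ι → ZMod 2 => Function.update v j0 (v j0 + 1)) := by
    intro j0 v
    simp only [Function.update_idem, Function.update_self]
    have h2 : ∀ x : ZMod 2, x + 1 + 1 = x := by decide
    rw [h2, Function.update_eq_self]
  -- entropy of the full vector
  have hinjfull : Function.Injective (fun (v : ι → ZMod 2) (i : Fin n) =>
      if h : i ∈ s0 then v ⟨i, h⟩ else ∑ k, v k) := by
    intro v w hvw
    funext k
    have h := congrFun hvw k.1
    simp only [dif_pos k.2] at h
    exact h
  have hfull : ent p (fullvec X) = ((n : ℝ) - 1) * Real.log 2 := by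
    rw [hreprfull, ent_comp_inj_s13 p T _ c hinjfull hc, hcardfun, hNR, negc, ← mul_assoc,
      hpow1, one_mul]
  -- marginal entropies
  have hhalf : c * ((2 ^ (n - 2) : ℕ) : ℝ) = 1 / 2 := by
    rw [hcdef]
    have : n - 1 = (n - 2) + 1 := by omega
    rw [this, pow_succ]
    push_cast
    rw [mul_comm ((1/2 : ℝ) ^ (n-2)) (1/2 : ℝ), mul_assoc, ← mul_pow]
    norm_num
  have hk2 : Fintype.card (ι → ZMod 2) = 2 ^ (n - 2) * 2 := by
    rw [hcardfun]
    have : n - 1 = (n - 2) + 1 := by omega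
    rw [this, pow_succ]
  have hlogtwo : 2 * Real.negMulLog ((1 : ℝ)/2) = Real.log 2 := by
    rw [Real.negMulLog, hlog]
    ring
  have hne : Nonempty ι := by
    rw [← Fintype.card_pos_iff, hcardι]; omega
  obtain ⟨j00⟩ := hne
  have hmarg : ∀ j : Fin n, ent p (X j) = Real.log 2 := by
    intro j
    by_cases hj : j ∈ s0
    · have hXj : X j = fun ω => (fun v : ι → ZMod 2 => v ⟨j, hj⟩) (T ω) := rfl
      have e : Equiv.Perm (ι → ZMod 2) := Function.Involutive.toPerm
        (fun v => Function.update v ⟨j, hj⟩ (v ⟨j, hj⟩ + 1)) (hflipinv ⟨j, hj⟩)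
      have he : ∀ v : ι → ZMod 2, (Function.Involutive.toPerm
          (fun v => Function.update v ⟨j, hj⟩ (v ⟨j, hj⟩ + 1)) (hflipinv ⟨j, hj⟩) v) ⟨j, hj⟩
          = v ⟨j, hj⟩ + 1 := by
        intro v
        show Function.update v ⟨j, hj⟩ (v ⟨j, hj⟩ + 1) ⟨j, hj⟩ = v ⟨j, hj⟩ + 1
        rw [Function.update_self]
      have hent := ent_comp_flip p T (fun v : ι → ZMod 2 => v ⟨j, hj⟩)
        (Function.Involutive.toPerm _ (hflipinv ⟨j, hj⟩)) he c hc (2 ^ (n - 2)) hk2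
      rw [hXj, hent, hhalf, hlogtwo]
    · have hj' : j = lastI := by
        by_contra hne'
        exact hj ((hmem j).mpr hne')
      have hXj : X j = fun ω => (fun v : ι → ZMod 2 => ∑ k, v k) (T ω) := by
        funext ω
        rw [hj', hXlast ω]
      have he : ∀ v : ι → ZMod 2, (∑ k, (Function.Involutive.toPerm
          (fun v => Function.update v j00 (v j00 + 1)) (hflipinv j00) v) k)
          = (∑ k, v k) + 1 := by
        intro v
        show (∑ k, Function.update v j00 (v j00 + 1) k) = (∑ k, v k) + 1
        rw [← Finset.add_sum_erase Finset.univ v (Finset.mem_univ j00),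
          Finset.sum_update_of_mem (Finset.mem_univ j00),
          Finset.sdiff_singleton_eq_erase]
        ring
      have hent := ent_comp_flip p T (fun v : ι → ZMod 2 => ∑ k, v k)
        (Function.Involutive.toPerm _ (hflipinv j00)) he c hc (2 ^ (n - 2)) hk2
      rw [hXj, hent, hhalf, hlogtwo]
  -- entropies of (n-1)-subvectors
  have hsub : ∀ j : Fin n, vecH p X (Finset.univ \ {j}) = ((n : ℝ) - 1) * Real.log 2 := by
    intro j
    by_cases hj : j = lastI
    · have hset : Finset.univ \ {j} = s0 := by
        ext i
        simp [Finset.mem_sdiff, hmem i, hj]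
      rw [vecH, hset]
      show ent p T = _
      simp only [ent, hc]
      rw [Finset.sum_const, Finset.card_univ, hcardfun, nsmul_eq_mul, hNR, negc,
        ← mul_assoc, hpow1, one_mul]
    · have hjs0 : j ∈ s0 := (hmem j).mpr hj
      have hlastmem : lastI ∈ Finset.univ \ {j} := by
        simp only [Finset.mem_sdiff, Finset.mem_univ, true_and, Finset.mem_singleton]
        intro h
        exact hj h.symm
      have hinj : Function.Injective (fun (v : ι → ZMod 2) (i : {i // i ∈ Finset.univ \ {j}}) =>
          if h : i.1 ∈ s0 then v ⟨i.1, h⟩ else ∑ k, v k) := by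
        intro v w hvw
        have hsum_eq : (∑ k, v k) = ∑ k, w k := by
          have h := congrFun hvw ⟨lastI, hlastmem⟩
          simp only [dif_neg (fun hm => ((hmem lastI).mp hm) rfl : ¬ lastI ∈ s0)] at h
          exact h
        have hother : ∀ k : ι, k.1 ≠ j → v k = w k := by
          intro k hk
          have hkmem : k.1 ∈ Finset.univ \ {j} := by
            simp only [Finset.mem_sdiff, Finset.mem_univ, true_and, Finset.mem_singleton]
            exact hk
          have h := congrFun hvw ⟨k.1, hkmem⟩
          simp only [dif_pos k.2] at h
          exact h
        funext k
        by_cases hk : k.1 = j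
        · have herase : ∑ x ∈ Finset.univ.erase k, v x = ∑ x ∈ Finset.univ.erase k, w x := by
            refine Finset.sum_congr rfl fun x hx => ?_
            refine hother x fun hxj => (Finset.mem_erase.mp hx).1 ?_
            exact Subtype.ext (hxj.trans hk.symm)
          have h := hsum_eq
          rw [← Finset.add_sum_erase Finset.univ v (Finset.mem_univ k),
            ← Finset.add_sum_erase Finset.univ w (Finset.mem_univ k), herase] at h
          exact add_right_cancel h
        · exact hother k hk
      rw [vecH, hrepr (Finset.univ \ {j}),
        ent_comp_inj_s13 p T _ c hinj hc, hcardfun, hNR, negc, ← mul_assoc, hpow1, one_mul]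
  -- final assembly
  rw [Oinfo, hfull]
  rw [Finset.sum_congr rfl (fun j _ => by rw [hmarg j, hsub j] :
    ∀ j ∈ (Finset.univ : Finset (Fin n)),
      ent p (X j) - vecH p X (Finset.univ \ {j})
        = Real.log 2 - ((n : ℝ) - 1) * Real.log 2)]
  rw [Finset.sum_const, Finset.card_univ, Fintype.card_fin, nsmul_eq_mul]
  ring
end
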